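/- arXiv:2603.14134 — 2 statements merged into one kernel-verified Lean document; each statement's English description precedes it below -/
import Mathlib

section
/- Let ψ : ℝ≥0 → ℝ≥0 be measurable with essential support equal to all of [0,∞), and assume all moments ∫_0^∞ ψ(r) r^{p-1} dr are finite for p > 0. Then lim_{p→∞} (p/‖ψ‖_∞ ∫_0^∞ ψ(r) r^{p-1} dr)^{1/p} = ∞. -/
open MeasureTheory Set

/-- The essential support of `ψ : ℝ → ℝ` inside `[0,∞)`: the set of points `t ≥ 0` having no
neighborhood on which `ψ` vanishes almost everywhere. -/
def essSupport (ψ : ℝ → ℝ) : Set ℝ :=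
  {t : ℝ | 0 ≤ t ∧ ∀ r > 0, 0 < volume {s ∈ Ioo (t - r) (t + r) ∩ Ici 0 | ψ s ≠ 0}}

/-!
Fix a level `a > 0`. Since `a + 1` lies in the essential support, the tail mass
`c = ∫_{r > a} ψ` is positive, and `r^{p-1} ≥ a^{p-1}` on that tail gives
`p/M ∫_0^∞ ψ(r) r^{p-1} dr ≥ (c / (a M)) p a^p`. The `p`-th root of the right-hand side tends
to `a`, so `I_p(ψ)` eventually exceeds any level below `a`.
-/

open Filter Topology

lemma setIntegral_Ioi_pos_of_mem_essSupport {ψ : ℝ → ℝ} (hnonneg : ∀ r, 0 ≤ ψ r) {a t : ℝ}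
    (hψ : IntegrableOn ψ (Ioi a)) (ht : t ∈ essSupport ψ) (hat : a < t) :
    0 < ∫ r in Ioi a, ψ r := by
  rw [setIntegral_pos_iff_support_of_nonneg_ae (ae_of_all _ hnonneg) hψ]
  refine (ht.2 (t - a) (sub_pos.2 hat)).trans_le (measure_mono ?_)
  rintro s ⟨⟨⟨has, -⟩, -⟩, hψs⟩
  exact ⟨hψs, by simpa using has⟩

lemma setIntegral_Ioi_mul_rpow_le_moment {ψ : ℝ → ℝ} (hnonneg : ∀ r, 0 ≤ ψ r) {a p : ℝ}
    (ha : 0 ≤ a) (hp : 1 ≤ p) (hψ : IntegrableOn ψ (Ioi a))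
    (hmom : IntegrableOn (fun r => ψ r * r ^ (p - 1)) (Ioi 0)) :
    (∫ r in Ioi a, ψ r) * a ^ (p - 1) ≤ ∫ r in Ioi 0, ψ r * r ^ (p - 1) := by
  have hsub : Ioi a ⊆ Ioi 0 := Ioi_subset_Ioi ha
  calc (∫ r in Ioi a, ψ r) * a ^ (p - 1)
      = ∫ r in Ioi a, ψ r * a ^ (p - 1) := (integral_mul_const _ _).symm
    _ ≤ ∫ r in Ioi a, ψ r * r ^ (p - 1) :=
        setIntegral_mono_on (hψ.mul_const _) (hmom.mono_set hsub) measurableSet_Ioi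
          fun r hr => mul_le_mul_of_nonneg_left
            (Real.rpow_le_rpow ha (le_of_lt hr) (by linarith)) (hnonneg r)
    _ ≤ ∫ r in Ioi 0, ψ r * r ^ (p - 1) := by
        refine setIntegral_mono_set hmom ?_ hsub.eventuallyLE
        filter_upwards [ae_restrict_mem measurableSet_Ioi] with r hr
        exact mul_nonneg (hnonneg r) (Real.rpow_nonneg (le_of_lt hr) _)

lemma tendsto_mul_mul_rpow_rpow_one_div {C a : ℝ} (hC : 0 < C) (ha : 0 < a) :
    Tendsto (fun p : ℝ => (C * p * a ^ p) ^ (1 / p)) atTop (𝓝 a) := by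
  have hinv : Tendsto (fun p : ℝ => 1 / p) atTop (𝓝 0) := by
    simpa only [one_div] using tendsto_inv_atTop_zero
  have hC1 : Tendsto (fun p : ℝ => C ^ (1 / p)) atTop (𝓝 1) := by
    simpa using tendsto_const_nhds.rpow hinv (Or.inl hC.ne')
  have hlim := (hC1.mul tendsto_rpow_div).mul_const a
  rw [one_mul, one_mul] at hlim
  refine hlim.congr' ?_
  filter_upwards [eventually_gt_atTop 0] with p hp
  rw [Real.mul_rpow (by positivity) (by positivity), Real.mul_rpow hC.le hp.le,
    ← Real.rpow_mul ha.le, mul_one_div_cancel hp.ne', Real.rpow_one]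

theorem Ip_tendsto_atTop_of_essSupport_Ici_general (ψ : ℝ → ℝ)
    (hnonneg : ∀ r, 0 ≤ ψ r) (M : ℝ) (hM : 0 < M)
    (hmom : ∀ p : ℝ, 0 < p → IntegrableOn (fun r => ψ r * r ^ (p - 1)) (Ioi 0))
    (hsupp : essSupport ψ = Ici 0) :
    Filter.Tendsto (fun p : ℝ => ((p / M) * ∫ r in Ioi (0:ℝ), ψ r * r ^ (p - 1)) ^ (1 / p))
      Filter.atTop Filter.atTop := by
  refine tendsto_atTop.2 fun K => ?_
  set a : ℝ := max K 0 + 1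
  have ha : 0 < a := by positivity
  have hψ : IntegrableOn ψ (Ioi a) :=
    ((hmom 1 one_pos).mono_set (Ioi_subset_Ioi ha.le)).congr_fun
      (fun r _ => by simp) measurableSet_Ioi
  set c := ∫ r in Ioi a, ψ r
  have hc : 0 < c := setIntegral_Ioi_pos_of_mem_essSupport hnonneg hψ
    (by rw [hsupp]; exact mem_Ici.2 (by positivity)) (lt_add_one a)
  have hKa : K < a := (le_max_left K 0).trans_lt (lt_add_one _)
  filter_upwards [(tendsto_mul_mul_rpow_rpow_one_div (C := c / (a * M)) (by positivity) ha).eventually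
    (lt_mem_nhds hKa), eventually_ge_atTop 1] with p hlt hp
  refine hlt.le.trans (Real.rpow_le_rpow (by positivity) ?_ (by positivity))
  calc c / (a * M) * p * a ^ p = p / M * (c * a ^ (p - 1)) := by
        rw [Real.rpow_sub_one ha.ne']; field_simp
    _ ≤ p / M * ∫ r in Ioi 0, ψ r * r ^ (p - 1) := by
        gcongr
        exact setIntegral_Ioi_mul_rpow_le_moment hnonneg ha.le hp hψ (hmom p (by linarith))

/-- if the essential support of `ψ` is all of `[0,∞)` and all moments are finite,
then `I_p(ψ) = (p/‖ψ‖_∞ ∫_0^∞ ψ(r) r^{p-1} dr)^{1/p} → ∞` as `p → ∞`. -/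
theorem Ip_tendsto_atTop_of_essSupport_Ici (ψ : ℝ → ℝ) (hmeas : Measurable ψ)
    (hnonneg : ∀ r, 0 ≤ ψ r) (M : ℝ) (hM : 0 < M)
    (hMsup : essSup ψ (volume.restrict (Ici (0:ℝ))) = M)
    (hbdd : ∀ᵐ r ∂(volume.restrict (Ici (0:ℝ))), ψ r ≤ M)
    (hmom : ∀ p : ℝ, 0 < p → IntegrableOn (fun r => ψ r * r ^ (p - 1)) (Ioi 0))
    (hsupp : essSupport ψ = Ici 0) :
    Filter.Tendsto (fun p : ℝ => ((p / M) * ∫ r in Ioi (0:ℝ), ψ r * r ^ (p - 1)) ^ (1 / p))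
      Filter.atTop Filter.atTop :=
  Ip_tendsto_atTop_of_essSupport_Ici_general ψ hnonneg M hM hmom hsupp
end

section
/- Every integrable log-concave function g : ℝⁿ → ℝ≥0 with 0 < ∫ g < ∞ admits constants a, c > 0 such that g(x) ≤ a·e^{-c|x|} for all x ∈ ℝⁿ. -/
/-!
Superlevel sets `{g ≥ b}` (`b > 0`) of a log-concave function are convex. As `∫ g > 0`, one of them
has positive measure, hence nonempty interior: `g ≥ β` on a ball `B(x₀, ρ)`. Log-concavity
transports this ball along segments: if `g x ≥ b`, then `g ≥ min b β` on balls of radius `ρ / 2`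
centred at every distance up to `dist x x₀ / 2` from `x₀`, and `g ≥ √(β g x)` on the one centred
at the midpoint. Integrability therefore bounds `g` and every superlevel set, say
`{g ≥ β / 2} ⊆ B(x₀, R)`. For `x` outside this ball, log-concavity along the segment from `x₀` to
`x`, evaluated at its point at distance `R` from `x₀`, gives `g x ≤ β 2 ^ (-dist x x₀ / R)`.
-/

open MeasureTheory Metric Set Filter Real

def IsLogConcave {E : Type*} [AddCommGroup E] [Module ℝ E] (g : E → ℝ) : Prop :=
  ∀ x y : E, ∀ l : ℝ, 0 < l → l < 1 →
    0 < g x * g y → g x ^ (1 - l) * g y ^ l ≤ g ((1 - l) • x + l • y)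

lemma le_rpow_one_sub_mul_rpow {b x y l : ℝ} (hb : 0 < b) (hx : b ≤ x) (hy : b ≤ y)
    (hl0 : 0 ≤ l) (hl1 : l ≤ 1) : b ≤ x ^ (1 - l) * y ^ l :=
  calc b = b ^ (1 - l) * b ^ l := by rw [← rpow_add hb, sub_add_cancel, rpow_one]
    _ ≤ x ^ (1 - l) * y ^ l := by
      have := hb.trans_le hx
      gcongr

lemma lt_mul_exp_of_rpow_one_sub_mul_rpow_lt {β s t : ℝ} (hβ : 0 < β) (hs : 0 < s) (ht : 0 < t)
    (h : β ^ (1 - t) * s ^ t < β / 2) : s < β * exp (-log 2 / t) := by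
  have hlog := log_lt_log (by positivity) h
  rw [log_mul (by positivity) (by positivity), log_rpow hβ, log_rpow hs,
    log_div hβ.ne' two_ne_zero] at hlog
  have hlog2 : log 2 < (log β - log s) * t := by linarith
  rw [← exp_log hs, ← exp_log hβ, ← exp_add, exp_lt_exp, neg_div]
  linarith [(div_lt_iff₀ ht).2 hlog2]

lemma exists_pos_measure_setOf_le {X : Type*} [MeasurableSpace X] {μ : Measure X} {g : X → ℝ}
    (hpos : 0 < ∫ x, g x ∂μ) : ∃ b, 0 < b ∧ 0 < μ {x | b ≤ g x} := by
  by_contra! h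
  have hsupp : {x | 0 < g x} ⊆ ⋃ k : ℕ, {x | 1 / ((k : ℝ) + 1) ≤ g x} := fun x hx => by
    obtain ⟨k, hk⟩ := exists_nat_one_div_lt (show 0 < g x from hx)
    exact mem_iUnion.2 ⟨k, hk.le⟩
  have hnull : μ {x | 0 < g x} = 0 :=
    measure_mono_null hsupp (measure_iUnion_null fun k => nonpos_iff_eq_zero.1 (h _ (by positivity)))
  have hle : g ≤ᵐ[μ] 0 := by
    rw [EventuallyLE, ae_iff]
    simpa using hnull
  exact (integral_nonpos_of_ae hle).not_gt hpos

lemma exists_setIntegral_compl_closedBall_lt {X : Type*} [PseudoMetricSpace X] [MeasurableSpace X]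
    [OpensMeasurableSpace X] {μ : Measure X} {g : X → ℝ} (hint : Integrable g μ) (x₀ : X) {ε : ℝ}
    (hε : 0 < ε) : ∃ r : ℝ, ∫ z in (closedBall x₀ r)ᶜ, g z ∂μ < ε := by
  have hanti : Antitone fun r : ℝ => (closedBall x₀ r)ᶜ := fun r s hrs =>
    compl_subset_compl.2 (closedBall_subset_closedBall hrs)
  have hempty : ⋂ r : ℝ, (closedBall x₀ r)ᶜ = ∅ :=
    eq_empty_of_forall_notMem fun x hx => mem_iInter.1 hx (dist x x₀) (mem_closedBall.2 le_rfl)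
  have htend := tendsto_setIntegral_of_antitone (μ := μ) (f := g)
    (fun r => measurableSet_closedBall.compl) hanti ⟨0, hint.integrableOn⟩
  rw [hempty, setIntegral_empty] at htend
  exact (htend.eventually (eventually_lt_nhds hε)).exists

lemma measureReal_ball_pos {X : Type*} [PseudoMetricSpace X] [ProperSpace X] [MeasurableSpace X]
    {μ : Measure X} [μ.IsOpenPosMeasure] [IsFiniteMeasureOnCompacts μ] (x : X) {r : ℝ}
    (hr : 0 < r) : 0 < μ.real (ball x r) :=
  ENNReal.toReal_pos (measure_ball_pos μ x hr).ne' measure_ball_lt_top.ne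

lemma exists_le_mul_exp_neg_norm {F : Type*} [SeminormedAddCommGroup F] {g : F → ℝ} {x₀ : F}
    {β R c : ℝ} (hβ : 0 < β) (hR : 0 ≤ R) (hc : 0 ≤ c) (hbdd : BddAbove (range g))
    (hdecay : ∀ x, R < dist x x₀ → g x ≤ β * exp (-c * dist x x₀)) :
    ∃ a, 0 < a ∧ ∀ x, g x ≤ a * exp (-c * ‖x‖) := by
  obtain ⟨M, hM⟩ := hbdd
  have hA : 0 < max M β := lt_max_of_lt_right hβ
  refine ⟨max M β * exp (c * (R + ‖x₀‖)), by positivity, fun x => ?_⟩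
  have hnorm : ‖x‖ ≤ dist x x₀ + ‖x₀‖ := norm_le_norm_add_norm_sub' x x₀ |>.trans_eq
    (by rw [dist_eq_norm, add_comm])
  rw [mul_assoc, ← exp_add]
  rcases le_or_gt (dist x x₀) R with hx | hx
  · calc g x ≤ max M β * 1 := by rw [mul_one]; exact (hM (mem_range_self x)).trans (le_max_left _ _)
      _ ≤ max M β * exp (c * (R + ‖x₀‖) + -c * ‖x‖) := by
        gcongr
        exact one_le_exp (by nlinarith)
  · calc g x ≤ β * exp (-c * dist x x₀) := hdecay x hx
      _ ≤ max M β * exp (c * (R + ‖x₀‖) + -c * ‖x‖) := by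
        gcongr
        · exact le_max_right _ _
        · nlinarith

section NormedSpace

variable {E : Type*} [NormedAddCommGroup E] [NormedSpace ℝ E]

lemma dist_one_sub_smul_add_smul_left (x₀ x : E) {l : ℝ} (hl : 0 ≤ l) :
    dist ((1 - l) • x₀ + l • x) x₀ = l * dist x x₀ := by
  rw [← AffineMap.lineMap_apply_module, dist_lineMap_left, norm_of_nonneg hl, dist_comm]

lemma exists_mem_ball_combo_eq {x₀ x z : E} {l ρ : ℝ} (hl : l < 1)
    (hz : z ∈ ball ((1 - l) • x₀ + l • x) ((1 - l) * ρ)) :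
    ∃ y ∈ ball x₀ ρ, (1 - l) • y + l • x = z := by
  have hl' : 0 < 1 - l := sub_pos.2 hl
  refine ⟨(1 - l)⁻¹ • (z - l • x), ?_, by rw [smul_inv_smul₀ hl'.ne', sub_add_cancel]⟩
  rw [mem_ball, dist_eq_norm] at hz ⊢
  have : (1 - l)⁻¹ • (z - l • x) - x₀ = (1 - l)⁻¹ • (z - ((1 - l) • x₀ + l • x)) := by
    conv_lhs => rw [← inv_smul_smul₀ hl'.ne' x₀]
    rw [← smul_sub]
    congr 1
    abel
  rw [this, norm_smul, norm_inv, Real.norm_of_nonneg hl'.le, inv_mul_lt_iff₀ hl']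
  exact hz

namespace IsLogConcave

variable {g : E → ℝ}

lemma convex_setOf_le (hg : IsLogConcave g) {b : ℝ} (hb : 0 < b) :
    Convex ℝ {x | b ≤ g x} := by
  refine convex_iff_forall_pos.2 fun x hx y hy p q hp hq hpq => ?_
  obtain rfl : p = 1 - q := by linarith
  have hgxy : 0 < g x * g y := mul_pos (hb.trans_le hx) (hb.trans_le hy)
  exact (le_rpow_one_sub_mul_rpow hb hx hy hq.le (by linarith)).trans
    (hg x y q hq (by linarith) hgxy)

lemma rpow_one_sub_mul_rpow_le_of_mem_ball (hg : IsLogConcave g) {β ρ l : ℝ} {x₀ x z : E}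
    (hβ : 0 < β) (hball : ball x₀ ρ ⊆ {x | β ≤ g x}) (hx : 0 < g x) (hl0 : 0 < l) (hl1 : l < 1)
    (hz : z ∈ ball ((1 - l) • x₀ + l • x) ((1 - l) * ρ)) :
    β ^ (1 - l) * g x ^ l ≤ g z := by
  obtain ⟨y, hy, rfl⟩ := exists_mem_ball_combo_eq hl1 hz
  have hβy : β ≤ g y := hball hy
  calc β ^ (1 - l) * g x ^ l ≤ g y ^ (1 - l) * g x ^ l := by gcongr
    _ ≤ g ((1 - l) • y + l • x) := hg y x l hl0 hl1 (mul_pos (hβ.trans_le hβy) hx)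

lemma exists_ball_subset_setOf_le_of_dist_eq (hg : IsLogConcave g) {β ρ b R : ℝ} {x₀ x : E}
    (hβ : 0 < β) (hρ : 0 ≤ ρ) (hball : ball x₀ ρ ⊆ {x | β ≤ g x}) (hb : 0 < b) (hbβ : b ≤ β)
    (hx : b ≤ g x) (hR : 0 < R) (hRx : 2 * R ≤ dist x x₀) :
    ∃ c, dist c x₀ = R ∧ ball c (ρ / 2) ⊆ {z | b ≤ g z} := by
  have hd : 0 < dist x x₀ := by linarith
  set l := R / dist x x₀
  have hl0 : 0 < l := by positivity
  have hl2 : l ≤ 1 / 2 := by rw [div_le_iff₀ hd]; linarith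
  refine ⟨(1 - l) • x₀ + l • x, ?_, fun z hz => ?_⟩
  · rw [dist_one_sub_smul_add_smul_left x₀ x hl0.le, div_mul_cancel₀ _ hd.ne']
  · have hz' : z ∈ ball ((1 - l) • x₀ + l • x) ((1 - l) * ρ) := ball_subset_ball (by nlinarith) hz
    exact (le_rpow_one_sub_mul_rpow hb hbβ hx (by linarith) (by linarith)).trans
      (hg.rpow_one_sub_mul_rpow_le_of_mem_ball hβ hball (hb.trans_le hx) hl0 (by linarith) hz')

lemma le_mul_exp_of_setOf_le_subset_ball (hg : IsLogConcave g) {β R : ℝ} {x₀ x : E}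
    (hβ : 0 < β) (hx₀ : β ≤ g x₀) (hR : {x | β / 2 ≤ g x} ⊆ ball x₀ R) (hx : R < dist x x₀) :
    g x ≤ β * exp (-(log 2 / R) * dist x x₀) := by
  have hR0 : 0 < R := pos_of_mem_ball (hR (show β / 2 ≤ g x₀ by linarith))
  have hd : 0 < dist x x₀ := hR0.trans hx
  rcases le_or_gt (g x) 0 with hgx | hgx
  · exact hgx.trans (by positivity)
  set t := R / dist x x₀
  have ht0 : 0 < t := by positivity
  have ht1 : t < 1 := (div_lt_one hd).2 hx
  have hfar : g ((1 - t) • x₀ + t • x) < β / 2 := by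
    by_contra! h
    have := hR h
    rw [mem_ball, dist_one_sub_smul_add_smul_left x₀ x ht0.le, div_mul_cancel₀ _ hd.ne'] at this
    exact lt_irrefl _ this
  have hβt : β ^ (1 - t) * g x ^ t < β / 2 := calc
    β ^ (1 - t) * g x ^ t ≤ g x₀ ^ (1 - t) * g x ^ t := by gcongr
    _ ≤ g ((1 - t) • x₀ + t • x) := hg x₀ x t ht0 ht1 (mul_pos (hβ.trans_le hx₀) hgx)
    _ < β / 2 := hfar
  have hexp : -log 2 / t = -(log 2 / R) * dist x x₀ := by
    simp only [t]
    field_simp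
  exact (hexp ▸ lt_mul_exp_of_rpow_one_sub_mul_rpow_lt hβ hgx ht0 hβt).le

end IsLogConcave

section Measure

variable [MeasurableSpace E] [BorelSpace E] [FiniteDimensional ℝ E] {μ : Measure E}
  [μ.IsAddHaarMeasure]

lemma Convex.interior_nonempty_of_measure_ne_zero {s : Set E} (hs : Convex ℝ s) (hμs : μ s ≠ 0) :
    (interior s).Nonempty := by
  by_contra! h
  refine hμs (measure_mono_null (fun x hx => ?_) (hs.addHaar_frontier μ))
  rw [frontier, h, sdiff_empty]
  exact subset_closure hx

lemma mul_measureReal_ball_le_setIntegral {g : E → ℝ} (hint : Integrable g μ) {b r : ℝ} {c : E}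
    (h : ∀ z ∈ ball c r, b ≤ g z) : b * μ.real (ball 0 r) ≤ ∫ z in ball c r, g z ∂μ := by
  rw [← Measure.addHaar_real_ball_center μ c]
  exact setIntegral_ge_of_const_le_real measurableSet_ball measure_ball_lt_top.ne h hint.integrableOn

namespace IsLogConcave

variable {g : E → ℝ}

lemma exists_ball_subset_setOf_le (hg : IsLogConcave g) (hpos : 0 < ∫ x, g x ∂μ) :
    ∃ β, 0 < β ∧ ∃ x₀ ρ, 0 < ρ ∧ ball x₀ ρ ⊆ {x | β ≤ g x} := by
  obtain ⟨β, hβ, hμ⟩ := exists_pos_measure_setOf_le hpos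
  obtain ⟨x₀, hx₀⟩ := (hg.convex_setOf_le hβ).interior_nonempty_of_measure_ne_zero hμ.ne'
  obtain ⟨ρ, hρ, hsub⟩ := Metric.isOpen_iff.1 isOpen_interior x₀ hx₀
  exact ⟨β, hβ, x₀, ρ, hρ, hsub.trans interior_subset⟩

lemma bddAbove_range (hg : IsLogConcave g) (hg0 : 0 ≤ g) (hint : Integrable g μ) {β ρ : ℝ}
    {x₀ : E} (hβ : 0 < β) (hρ : 0 < ρ) (hball : ball x₀ ρ ⊆ {x | β ≤ g x}) :
    BddAbove (range g) := by
  set v := μ.real (ball 0 ((1 - 1 / 2) * ρ))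
  have hv : 0 < v := measureReal_ball_pos 0 (by positivity)
  refine ⟨((∫ x, g x ∂μ) / (v * √β)) ^ 2, forall_mem_range.2 fun x => ?_⟩
  rcases le_or_gt (g x) 0 with hx | hx
  · exact hx.trans (sq_nonneg _)
  have hmid : ∀ z ∈ ball ((1 - 1 / 2 : ℝ) • x₀ + (1 / 2 : ℝ) • x) ((1 - 1 / 2) * ρ),
      √β * √(g x) ≤ g z := fun z hz => by
    have := hg.rpow_one_sub_mul_rpow_le_of_mem_ball hβ hball hx (by norm_num) (by norm_num) hz
    rw [sqrt_eq_rpow, sqrt_eq_rpow]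
    convert this using 3
    norm_num
  have hI : √β * √(g x) * v ≤ ∫ x, g x ∂μ :=
    (mul_measureReal_ball_le_setIntegral hint hmid).trans
      (setIntegral_le_integral hint (ae_of_all _ hg0))
  have hsqrt : √(g x) ≤ (∫ x, g x ∂μ) / (v * √β) := by
    rw [le_div_iff₀ (by positivity)]
    linarith
  calc g x = √(g x) ^ 2 := (sq_sqrt hx.le).symm
    _ ≤ _ := by gcongr

lemma isBounded_setOf_le (hg : IsLogConcave g) (hg0 : 0 ≤ g) (hint : Integrable g μ)
    {β ρ b : ℝ} {x₀ : E} (hβ : 0 < β) (hρ : 0 < ρ) (hball : ball x₀ ρ ⊆ {x | β ≤ g x})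
    (hb : 0 < b) : Bornology.IsBounded {x | b ≤ g x} := by
  set b' := min b β
  have hb' : 0 < b' := lt_min hb hβ
  refine Bornology.IsBounded.subset ?_ fun x (hx : b ≤ g x) => (min_le_left b β).trans hx
  set v := μ.real (ball 0 (ρ / 2))
  have hv : 0 < v := measureReal_ball_pos 0 (by positivity)
  obtain ⟨r, hr⟩ := exists_setIntegral_compl_closedBall_lt hint x₀ (mul_pos hb' hv)
  set R := |r| + ρ
  refine (isBounded_closedBall (x := x₀) (r := 2 * R)).subset fun x hx => ?_
  by_contra hfar
  rw [mem_closedBall, not_le] at hfar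
  obtain ⟨c, hc, hsub⟩ := hg.exists_ball_subset_setOf_le_of_dist_eq hβ hρ.le hball hb'
    (min_le_right b β) hx (by positivity) hfar.le
  have htail : ball c (ρ / 2) ⊆ (closedBall x₀ r)ᶜ :=
    (closedBall_disjoint_ball (by rw [dist_comm, hc]; linarith [le_abs_self r])).subset_compl_left
  have := (mul_measureReal_ball_le_setIntegral hint hsub).trans
    (setIntegral_mono_set hint.integrableOn (ae_of_all _ hg0) htail.eventuallyLE)
  linarith

end IsLogConcave

end Measure

end NormedSpace

/-- an integrable log-concave function has an exponential upper bound. -/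
theorem logConcave_exp_bound {n : ℕ}
    (g : EuclideanSpace ℝ (Fin n) → ℝ) (hnonneg : ∀ x, 0 ≤ g x)
    (hlc : ∀ x y : EuclideanSpace ℝ (Fin n), ∀ l : ℝ, 0 < l → l < 1 →
      0 < g x * g y → g x ^ (1 - l) * g y ^ l ≤ g ((1 - l) • x + l • y))
    (hint : Integrable g) (hpos : 0 < ∫ x, g x) :
    ∃ a c : ℝ, 0 < a ∧ 0 < c ∧ ∀ x, g x ≤ a * Real.exp (-c * ‖x‖) := by
  have hg : IsLogConcave g := hlc
  obtain ⟨β, hβ, x₀, ρ, hρ, hball⟩ := hg.exists_ball_subset_setOf_le hpos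
  have hx₀ : β ≤ g x₀ := hball (mem_ball_self hρ)
  obtain ⟨R, hR⟩ := (hg.isBounded_setOf_le hnonneg hint hβ hρ hball (half_pos hβ)).subset_ball x₀
  have hR0 : 0 < R := pos_of_mem_ball (hR (show β / 2 ≤ g x₀ by linarith))
  have hc : 0 < log 2 / R := div_pos (log_pos one_lt_two) hR0
  obtain ⟨a, ha, hbound⟩ := exists_le_mul_exp_neg_norm hβ hR0.le hc.le
    (hg.bddAbove_range hnonneg hint hβ hρ hball)
    fun x hx => hg.le_mul_exp_of_setOf_le_subset_ball hβ hx₀ hR hx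
  exact ⟨a, log 2 / R, ha, hc, hbound⟩
end
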